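/- Let W_L be a right-angled Coxeter group on the vertex set of a simplicial complex L (generators are vertices, with relations v^2 = 1 and [v,w] = 1 whenever {v,w} spans an edge of L), let G be a Z/2-vector space, and let λ: L^{[0]} → G be a characteristic function, i.e., whenever vertices v_0,...,v_k span a k-simplex of L, the vectors λ(v_0),...,λ(v_k) are linearly independent over Z/2. Let Λ: W_L → G be the homomorphism extending λ. Then, assuming L is a flag complex, the kernel of Λ is torsion-free. -/

import Mathlib

/-- The defining relations of the right-angled Coxeter group of the complex `L`. -/
def racgRels (V : Type*) [DecidableEq V] (L : Set (Finset V)) : Set (FreeGroup V) :=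
  {r | (∃ v : V, r = FreeGroup.of v * FreeGroup.of v) ∨
    ∃ v w : V, v ≠ w ∧ ({v, w} : Finset V) ∈ L ∧
      r = (FreeGroup.of v * FreeGroup.of w) ^ 2}

/-!
Call a word in the vertices *reduced* if no letter can be moved, by commuting it past adjacent
letters, next to a later copy of itself. Letting a generator `v` act on reduced words modulo such
commutations, by deleting `v` if it can be moved to the front and prepending it otherwise, defines
an action of `W_L`. Evaluating it at the empty word shows that two reduced words representing the
same element differ only by commutations; in particular reduced words are geodesic.

Let a geodesic word represent an element of finite order. If no letter can be moved both to its
front and to its end, all powers of the word are reduced, hence nontrivial, so the word is empty.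
Otherwise such a letter `v` either occurs once and commutes with the rest, or can be moved to both
ends; by induction on the length the element is conjugate to a product of pairwise commuting
generators, i.e. into `W_T` for a clique `T` of the 1-skeleton, which is a simplex as `L` is flag.
On `W_T ≅ (ℤ/2)^T` the map `Λ` is injective because `λ` is a characteristic function.
-/

namespace RightAngledCoxeter

variable {V : Type*}

section Words

variable (G : SimpleGraph V)

def Swap (l l' : List V) : Prop :=
  ∃ x y a b, G.Adj x y ∧ l = a ++ x :: y :: b ∧ l' = a ++ y :: x :: b

abbrev CommEquiv : List V → List V → Prop := Relation.EqvGen (Swap G)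

def CanStart (v : V) (l : List V) : Prop := ∃ a b, l = a ++ v :: b ∧ ∀ x ∈ a, G.Adj x v

def CanEnd (v : V) (l : List V) : Prop := ∃ a b, l = a ++ v :: b ∧ ∀ x ∈ b, G.Adj x v

def Reduced : List V → Prop
  | [] => True
  | v :: l => ¬ CanStart G v l ∧ Reduced l

variable {G}

lemma Swap.perm {l l' : List V} (h : Swap G l l') : l.Perm l' := by
  obtain ⟨x, y, a, b, -, rfl, rfl⟩ := h
  exact (List.Perm.swap y x b).append_left a

lemma Swap.append_left {l l' : List V} (p : List V) (h : Swap G l l') :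
    Swap G (p ++ l) (p ++ l') := by
  obtain ⟨x, y, a, b, hxy, rfl, rfl⟩ := h
  exact ⟨x, y, p ++ a, b, hxy, by simp, by simp⟩

lemma CommEquiv.perm {l l' : List V} (h : CommEquiv G l l') : l.Perm l' :=
  (List.Perm.eqv V).eqvGen_iff.1 (Relation.EqvGen.mono (fun _ _ => Swap.perm) _ _ h)

lemma CommEquiv.append_left {l l' : List V} (p : List V) (h : CommEquiv G l l') :
    CommEquiv G (p ++ l) (p ++ l') :=
  (InvImage.equivalence _ (p ++ ·) (Relation.EqvGen.is_equivalence _)).eqvGen_iff.1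
    (Relation.EqvGen.mono (fun _ _ h => .rel _ _ (h.append_left p)) _ _ h)

lemma commEquiv_cons_of_forall_adj {v : V} {a : List V} (ha : ∀ x ∈ a, G.Adj x v)
    (b : List V) : CommEquiv G (a ++ v :: b) (v :: (a ++ b)) := by
  induction a with
  | nil => exact .refl _
  | cons z a ih =>
    have hswap : Swap G (z :: v :: (a ++ b)) (v :: z :: (a ++ b)) :=
      ⟨z, v, [], _, ha z (by simp), rfl, rfl⟩
    exact .trans _ _ _ ((ih fun x hx => ha x (by simp [hx])).append_left [z]) (.rel _ _ hswap)

lemma not_mem_of_forall_adj {v : V} {a : List V} (ha : ∀ x ∈ a, G.Adj x v) : v ∉ a :=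
  fun hv => G.irrefl (ha v hv)

lemma canStart_cons {v z : V} {l : List V} :
    CanStart G v (z :: l) ↔ v = z ∨ G.Adj z v ∧ CanStart G v l := by
  constructor
  · rintro ⟨_ | ⟨x, a⟩, b, he, ha⟩
    · exact .inl (List.cons_eq_cons.1 he).1.symm
    · obtain ⟨rfl, rfl⟩ := List.cons_eq_cons.1 he
      exact .inr ⟨ha _ (by simp), a, b, rfl, fun y hy => ha y (by simp [hy])⟩
  · rintro (rfl | ⟨hz, a, b, rfl, ha⟩)
    · exact ⟨[], l, rfl, by simp⟩
    · exact ⟨z :: a, b, rfl, by simpa [hz] using ha⟩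

lemma canEnd_cons {v z : V} {l : List V} :
    CanEnd G v (z :: l) ↔ (v = z ∧ ∀ x ∈ l, G.Adj x v) ∨ CanEnd G v l := by
  constructor
  · rintro ⟨_ | ⟨x, a⟩, b, he, hb⟩
    · obtain ⟨rfl, rfl⟩ := List.cons_eq_cons.1 he
      exact .inl ⟨rfl, hb⟩
    · obtain ⟨rfl, rfl⟩ := List.cons_eq_cons.1 he
      exact .inr ⟨a, b, rfl, hb⟩
  · rintro (⟨rfl, hl⟩ | ⟨a, b, rfl, hb⟩)
    · exact ⟨[], l, rfl, hl⟩
    · exact ⟨z :: a, b, rfl, hb⟩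

lemma CanStart.mem {v : V} {l : List V} (h : CanStart G v l) : v ∈ l := by
  obtain ⟨a, b, rfl, -⟩ := h
  simp

lemma CanEnd.mem {v : V} {l : List V} (h : CanEnd G v l) : v ∈ l := by
  obtain ⟨a, b, rfl, -⟩ := h
  simp

lemma canStart_append {v : V} {p q : List V} :
    CanStart G v (p ++ q) ↔ CanStart G v p ∨ (∀ x ∈ p, G.Adj x v) ∧ CanStart G v q := by
  induction p with
  | nil => simp [CanStart]
  | cons z p ih =>
    simp only [List.cons_append, canStart_cons, ih, List.mem_cons, forall_eq_or_imp]
    tauto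

lemma reduced_append {p q : List V} :
    Reduced G (p ++ q) ↔
      Reduced G p ∧ Reduced G q ∧ ∀ v, CanEnd G v p → ¬ CanStart G v q := by
  induction p with
  | nil => simp [Reduced, CanEnd]
  | cons z p ih =>
    simp only [List.cons_append, Reduced, ih, canStart_append, canEnd_cons]
    constructor
    · rintro ⟨hz, hp, hq, hpq⟩
      exact ⟨⟨fun h => hz (.inl h), hp⟩, hq, by
        rintro v (⟨rfl, hall⟩ | hv) hvq
        exacts [hz (.inr ⟨hall, hvq⟩), hpq v hv hvq]⟩
    · rintro ⟨⟨hz, hp⟩, hq, hpq⟩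
      exact ⟨by rintro (h | ⟨hall, hzq⟩); exacts [hz h, hpq z (.inl ⟨rfl, hall⟩) hzq],
        hp, hq, fun v hv => hpq v (.inr hv)⟩

lemma canStart_swap {v : V} {l l' : List V} (h : Swap G l l') :
    CanStart G v l ↔ CanStart G v l' := by
  obtain ⟨x, y, a, b, hxy, rfl, rfl⟩ := h
  have hyx := hxy.symm
  have key : CanStart G v (x :: y :: b) ↔ CanStart G v (y :: x :: b) := by
    simp only [canStart_cons]
    constructor <;> rintro (rfl | ⟨h1, rfl | ⟨h2, h⟩⟩) <;> tauto
  simp only [canStart_append, key]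

lemma Reduced.flatten_replicate {l : List V} (hl : Reduced G l)
    (hcyc : ∀ v, CanEnd G v l → ¬ CanStart G v l) (n : ℕ) :
    Reduced G (List.replicate n l).flatten := by
  suffices Reduced G (List.replicate n l).flatten ∧
      ∀ v, CanEnd G v l → ¬ CanStart G v (List.replicate n l).flatten from this.1
  induction n with
  | zero => exact ⟨trivial, fun v _ h => by simp [CanStart] at h⟩
  | succ n ih =>
    simp only [List.replicate_succ, List.flatten_cons, reduced_append, canStart_append]
    refine ⟨⟨hl, ih.1, ih.2⟩, fun v hv => ?_⟩
    rintro (h | ⟨hall, -⟩)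
    exacts [hcyc v hv h, G.irrefl (hall v hv.mem)]

lemma exists_commEquiv_of_canStart_of_canEnd {v : V} {l : List V} (hs : CanStart G v l)
    (he : CanEnd G v l) :
    (∃ m, (∀ x ∈ m, G.Adj x v) ∧ CommEquiv G l (v :: m)) ∨
      ∃ m, CommEquiv G l (v :: m ++ [v]) := by
  obtain ⟨a, b, rfl, ha⟩ := hs
  obtain ⟨e, f, hef, hf⟩ := he
  rcases List.append_eq_append_iff.1 hef with
    ⟨_ | ⟨u, k⟩, rfl, hk⟩ | ⟨_ | ⟨u, k⟩, rfl, hk⟩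
  · obtain rfl : b = f := (List.cons_eq_cons.1 hk).2
    refine .inl ⟨a ++ b, fun x hx => ?_, commEquiv_cons_of_forall_adj ha b⟩
    rcases List.mem_append.1 hx with hx | hx
    exacts [ha x hx, hf x hx]
  · obtain ⟨rfl, rfl⟩ := List.cons_eq_cons.1 hk
    refine .inr ⟨a ++ k ++ f, .trans _ _ _ (commEquiv_cons_of_forall_adj ha _) ?_⟩
    simpa using
      CommEquiv.append_left (v :: (a ++ k)) (.symm _ _ (commEquiv_cons_of_forall_adj hf []))
  · obtain rfl : f = b := (List.cons_eq_cons.1 hk).2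
    refine .inl ⟨e ++ f, fun x hx => ?_, by simpa using commEquiv_cons_of_forall_adj ha f⟩
    rcases List.mem_append.1 hx with hx | hx
    exacts [ha x (by simp [hx]), hf x hx]
  · obtain rfl : u = v := (List.cons_eq_cons.1 hk).1.symm
    exact absurd (by simp) (not_mem_of_forall_adj ha)

section Erase

variable [DecidableEq V]

lemma erase_eq_of_forall_adj {v : V} {a : List V} (ha : ∀ x ∈ a, G.Adj x v) (b : List V) :
    (a ++ v :: b).erase v = a ++ b := by
  rw [List.erase_append_right _ (not_mem_of_forall_adj ha), List.erase_cons_head]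

lemma CanStart.erase {v w : V} {l : List V} (h : CanStart G v l) (hvw : v ≠ w) :
    CanStart G v (l.erase w) := by
  obtain ⟨a, b, rfl, ha⟩ := h
  by_cases hw : w ∈ a
  · rw [List.erase_append_left _ hw]
    exact ⟨a.erase w, b, rfl, fun x hx => ha x (List.erase_subset hx)⟩
  · rw [List.erase_append_right _ hw, List.erase_cons_tail (by simpa using hvw)]
    exact ⟨a, b.erase w, rfl, ha⟩

lemma CanStart.of_erase {v z : V} {l : List V} (hvz : G.Adj v z) (hv : CanStart G v l)
    (hz : CanStart G z (l.erase v)) : CanStart G z l := by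
  obtain ⟨a, b, rfl, ha⟩ := hv
  rw [erase_eq_of_forall_adj ha, canStart_append] at hz
  rw [canStart_append, canStart_cons]
  tauto

lemma Reduced.erase {v : V} {l : List V} (hl : Reduced G l) (h : CanStart G v l) :
    Reduced G (l.erase v) := by
  obtain ⟨a, b, rfl, ha⟩ := h
  rw [erase_eq_of_forall_adj ha]
  obtain ⟨hra, ⟨-, hrb⟩, hab⟩ := reduced_append.1 hl
  refine reduced_append.2 ⟨hra, hrb, fun u hu hub => hab u hu ?_⟩
  exact canStart_cons.2 (.inr ⟨(ha u hu.mem).symm, hub⟩)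

lemma Reduced.not_canStart_erase {v : V} {l : List V} (hl : Reduced G l) (h : CanStart G v l) :
    ¬ CanStart G v (l.erase v) := by
  obtain ⟨a, b, rfl, ha⟩ := h
  rw [erase_eq_of_forall_adj ha, canStart_append]
  rintro (hva | ⟨-, hvb⟩)
  · exact not_mem_of_forall_adj ha hva.mem
  · exact (reduced_append.1 hl).2.1.1 hvb

lemma commEquiv_cons_erase {v : V} {l : List V} (h : CanStart G v l) :
    CommEquiv G (v :: l.erase v) l := by
  obtain ⟨a, b, rfl, ha⟩ := h
  rw [erase_eq_of_forall_adj ha]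
  exact .symm _ _ (commEquiv_cons_of_forall_adj ha b)

lemma Swap.commEquiv_erase {l l' : List V} (h : Swap G l l') (v : V) :
    CommEquiv G (l.erase v) (l'.erase v) := by
  obtain ⟨x, y, a, b, hxy, rfl, rfl⟩ := h
  by_cases hva : v ∈ a
  · simp only [List.erase_append_left _ hva]
    exact .rel _ _ ⟨x, y, _, b, hxy, rfl, rfl⟩
  simp only [List.erase_append_right _ hva]
  by_cases hvx : v = x
  · subst hvx
    simp only [List.erase_cons_head, beq_iff_eq, hxy.ne.symm, not_false_eq_true,
      List.erase_cons_tail]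
    exact .refl _
  by_cases hvy : v = y
  · subst hvy
    simp only [beq_iff_eq, hxy.ne, not_false_eq_true, List.erase_cons_tail, List.erase_cons_head]
    exact .refl _
  simp only [beq_iff_eq, Ne.symm hvx, Ne.symm hvy, not_false_eq_true, List.erase_cons_tail]
  exact .rel _ _ ⟨x, y, a, _, hxy, rfl, rfl⟩

end Erase

section GenMul

variable (G) [DecidableEq V]

open Classical in
noncomputable def genMul (v : V) (l : List V) : List V :=
  if CanStart G v l then l.erase v else v :: l

variable {G}

lemma genMul_of_canStart {v : V} {l : List V} (h : CanStart G v l) : genMul G v l = l.erase v :=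
  if_pos h

lemma genMul_of_not_canStart {v : V} {l : List V} (h : ¬ CanStart G v l) : genMul G v l = v :: l :=
  if_neg h

lemma Swap.commEquiv_genMul {l l' : List V} (h : Swap G l l') (v : V) :
    CommEquiv G (genMul G v l) (genMul G v l') := by
  by_cases hv : CanStart G v l
  · rw [genMul_of_canStart hv, genMul_of_canStart ((canStart_swap h).1 hv)]
    exact h.commEquiv_erase v
  · rw [genMul_of_not_canStart hv, genMul_of_not_canStart (mt (canStart_swap h).2 hv)]
    exact .rel _ _ (h.append_left [v])

lemma reduced_genMul {l : List V} (hl : Reduced G l) (v : V) : Reduced G (genMul G v l) := by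
  by_cases hv : CanStart G v l
  · rw [genMul_of_canStart hv]
    exact hl.erase hv
  · rw [genMul_of_not_canStart hv]
    exact ⟨hv, hl⟩

lemma Reduced.commEquiv_genMul_genMul {l : List V} (hl : Reduced G l) (v : V) :
    CommEquiv G (genMul G v (genMul G v l)) l := by
  by_cases hv : CanStart G v l
  · rw [genMul_of_canStart hv, genMul_of_not_canStart (hl.not_canStart_erase hv)]
    exact commEquiv_cons_erase hv
  · rw [genMul_of_not_canStart hv, genMul_of_canStart (canStart_cons.2 (.inl rfl)),
      List.erase_cons_head]
    exact .refl _

lemma commEquiv_genMul_comm {v w : V} (hvw : G.Adj v w) (l : List V) :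
    CommEquiv G (genMul G v (genMul G w l)) (genMul G w (genMul G v l)) := by
  have hne := G.ne_of_adj hvw
  by_cases hv : CanStart G v l <;> by_cases hw : CanStart G w l
  · rw [genMul_of_canStart hw, genMul_of_canStart (hv.erase hne), genMul_of_canStart hv,
      genMul_of_canStart (hw.erase hne.symm), List.erase_comm]
    exact .refl _
  · rw [genMul_of_not_canStart hw, genMul_of_canStart (canStart_cons.2 (.inr ⟨hvw.symm, hv⟩)),
      genMul_of_canStart hv, genMul_of_not_canStart (mt (CanStart.of_erase hvw hv) hw),
      List.erase_cons_tail (by simpa using hne.symm)]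
    exact .refl _
  · rw [genMul_of_canStart hw, genMul_of_not_canStart (mt (CanStart.of_erase hvw.symm hw) hv),
      genMul_of_not_canStart hv, genMul_of_canStart (canStart_cons.2 (.inr ⟨hvw, hw⟩)),
      List.erase_cons_tail (by simpa using hne)]
    exact .refl _
  · have hvw' : ¬ CanStart G v (w :: l) := by rw [canStart_cons]; tauto
    have hwv' : ¬ CanStart G w (v :: l) := by rw [canStart_cons]; tauto
    rw [genMul_of_not_canStart hw, genMul_of_not_canStart hvw', genMul_of_not_canStart hv,
      genMul_of_not_canStart hwv']
    exact .rel _ _ ⟨v, w, [], l, hvw, rfl, rfl⟩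

end GenMul

section ReducedTrace

variable (G)

def ReducedTrace : Type _ := {t : Quot (Swap G) // ∃ l, Reduced G l ∧ Quot.mk _ l = t}

variable {G}

def ReducedTrace.mk (l : List V) (hl : Reduced G l) : ReducedTrace G :=
  ⟨Quot.mk _ l, l, hl, rfl⟩

lemma ReducedTrace.commEquiv_of_mk_eq_mk {l l' : List V} {hl : Reduced G l} {hl' : Reduced G l'}
    (h : mk l hl = mk l' hl') : CommEquiv G l l' :=
  Quot.eqvGen_exact (congrArg Subtype.val h)

variable [DecidableEq V]

noncomputable def ReducedTrace.applyGen (v : V) : ReducedTrace G → ReducedTrace G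
  | ⟨t, ht⟩ => ⟨Quot.lift (fun l => Quot.mk _ (genMul G v l))
      (fun _ _ h => Quot.eqvGen_sound (h.commEquiv_genMul v)) t, by
        obtain ⟨l, hl, rfl⟩ := ht
        exact ⟨_, reduced_genMul hl v, rfl⟩⟩

lemma ReducedTrace.applyGen_mk (v : V) {l : List V} (hl : Reduced G l) :
    (mk l hl).applyGen v = mk (genMul G v l) (reduced_genMul hl v) :=
  rfl

lemma ReducedTrace.applyGen_involutive (v : V) :
    Function.Involutive (ReducedTrace.applyGen (G := G) v) := by
  rintro ⟨_, l, hl, rfl⟩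
  exact Subtype.ext (Quot.eqvGen_sound (hl.commEquiv_genMul_genMul v))

lemma ReducedTrace.applyGen_comm {v w : V} (hvw : G.Adj v w) (t : ReducedTrace G) :
    (t.applyGen w).applyGen v = (t.applyGen v).applyGen w := by
  obtain ⟨_, l, hl, rfl⟩ := t
  exact Subtype.ext (Quot.eqvGen_sound (commEquiv_genMul_comm hvw l))

end ReducedTrace

end Words

section Group

variable [DecidableEq V] (L : Set (Finset V))

def commGraph : SimpleGraph V where
  Adj v w := v ≠ w ∧ ({v, w} : Finset V) ∈ L
  symm := ⟨fun v w h => ⟨h.1.symm, Finset.pair_comm v w ▸ h.2⟩⟩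
  loopless := ⟨fun _ h => h.1 rfl⟩

local notation "W" => PresentedGroup (racgRels V L)

def wordProd (l : List V) : W := (l.map PresentedGroup.of).prod

variable {L}

@[simp] lemma wordProd_nil : wordProd L [] = 1 := rfl

@[simp] lemma wordProd_cons (v : V) (l : List V) :
    wordProd L (v :: l) = PresentedGroup.of v * wordProd L l :=
  List.prod_cons

@[simp] lemma wordProd_append (l l' : List V) :
    wordProd L (l ++ l') = wordProd L l * wordProd L l' := by
  simp [wordProd]

lemma of_mul_self (v : V) : (PresentedGroup.of v : W) * PresentedGroup.of v = 1 :=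
  PresentedGroup.one_of_mem (.inl ⟨v, rfl⟩)

lemma of_inv (v : V) : (PresentedGroup.of v : W)⁻¹ = PresentedGroup.of v :=
  inv_eq_of_mul_eq_one_right (of_mul_self v)

lemma commute_of_adj {v w : V} (h : (commGraph L).Adj v w) :
    Commute (PresentedGroup.of v : W) (PresentedGroup.of w) := by
  have hsq : ((PresentedGroup.of v : W) * PresentedGroup.of w) ^ 2 = 1 :=
    PresentedGroup.one_of_mem (.inr ⟨v, w, h.1, h.2, rfl⟩)
  calc (PresentedGroup.of v : W) * PresentedGroup.of w
      = ((PresentedGroup.of v : W) * PresentedGroup.of w)⁻¹ :=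
        eq_inv_of_mul_eq_one_left (by rw [← pow_two, hsq])
    _ = PresentedGroup.of w * PresentedGroup.of v := by rw [mul_inv_rev, of_inv, of_inv]

lemma commute_wordProd_of_forall_adj {v : V} {a : List V}
    (ha : ∀ x ∈ a, (commGraph L).Adj x v) : Commute (PresentedGroup.of v : W) (wordProd L a) :=
  Commute.list_prod_right _ _ <| by
    simpa using fun x hx => commute_of_adj (ha x hx).symm

lemma wordProd_reverse (l : List V) : wordProd L l.reverse = (wordProd L l)⁻¹ := by
  simp [wordProd, List.prod_inv_reverse, Function.comp_def, of_inv]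

lemma exists_wordProd_eq (g : W) : ∃ l, wordProd L l = g := by
  have hg : g ∈ Subgroup.closure (Set.range PresentedGroup.of) := by
    simp [PresentedGroup.closure_range_of]
  induction hg using Subgroup.closure_induction with
  | mem _ h => obtain ⟨v, rfl⟩ := h; exact ⟨[v], by simp⟩
  | one => exact ⟨[], rfl⟩
  | mul _ _ _ _ hx hy =>
    obtain ⟨⟨l, rfl⟩, ⟨l', rfl⟩⟩ := And.intro hx hy
    exact ⟨l ++ l', wordProd_append l l'⟩
  | inv _ _ hx => obtain ⟨l, rfl⟩ := hx; exact ⟨l.reverse, wordProd_reverse l⟩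

lemma Swap.wordProd_eq {l l' : List V} (h : Swap (commGraph L) l l') :
    wordProd L l = wordProd L l' := by
  obtain ⟨x, y, a, b, hxy, rfl, rfl⟩ := h
  simp only [wordProd_append, wordProd_cons, ← mul_assoc, (commute_of_adj hxy).eq]

lemma CommEquiv.wordProd_eq {l l' : List V} (h : CommEquiv (commGraph L) l l') :
    wordProd L l = wordProd L l' :=
  (InvImage.equivalence _ (wordProd L) eq_equivalence).eqvGen_iff.1
    (Relation.EqvGen.mono (fun _ _ => Swap.wordProd_eq) _ _ h)

lemma wordProd_cons_of_canStart {v : V} {l : List V} (h : CanStart (commGraph L) v l) :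
    wordProd L (v :: l) = wordProd L (l.erase v) := by
  obtain ⟨a, b, rfl, ha⟩ := h
  rw [erase_eq_of_forall_adj ha, wordProd_cons, wordProd_append, wordProd_append, wordProd_cons,
    ← mul_assoc, (commute_wordProd_of_forall_adj ha).eq, mul_assoc,
    ← mul_assoc _ _ (wordProd L b), of_mul_self, one_mul]

variable (L) in
noncomputable def action : W →* Equiv.Perm (ReducedTrace (commGraph L)) :=
  PresentedGroup.toGroup (f := fun v => (ReducedTrace.applyGen_involutive v).toPerm _) <| by
    rintro r (⟨v, rfl⟩ | ⟨v, w, hne, hL, rfl⟩) <;> ext1 t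
    · simp [ReducedTrace.applyGen_involutive v t]
    · simp only [pow_two, map_mul, FreeGroup.lift_apply_of, Equiv.Perm.coe_mul,
        Function.Involutive.coe_toPerm, Function.comp_apply, Equiv.Perm.coe_one, id_eq]
      rw [ReducedTrace.applyGen_comm (show (commGraph L).Adj v w from ⟨hne, hL⟩),
        ReducedTrace.applyGen_involutive v, ReducedTrace.applyGen_involutive w]

lemma action_of (v : V) (t : ReducedTrace (commGraph L)) :
    action L (PresentedGroup.of v) t = t.applyGen v := by
  simp [action]

lemma action_wordProd {l : List V} (hl : Reduced (commGraph L) l) :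
    action L (wordProd L l) (ReducedTrace.mk [] trivial) = ReducedTrace.mk l hl := by
  induction l with
  | nil => rfl
  | cons v l ih =>
    rw [wordProd_cons, map_mul, Equiv.Perm.mul_apply, ih hl.2, action_of,
      ReducedTrace.applyGen_mk]
    exact Subtype.ext (congrArg (Quot.mk _) (genMul_of_not_canStart hl.1))

theorem Reduced.commEquiv_of_wordProd_eq {l l' : List V} (hl : Reduced (commGraph L) l)
    (hl' : Reduced (commGraph L) l') (h : wordProd L l = wordProd L l') :
    CommEquiv (commGraph L) l l' := by
  apply ReducedTrace.commEquiv_of_mk_eq_mk (hl := hl) (hl' := hl')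
  rw [← action_wordProd hl, ← action_wordProd hl', h]

variable (L) in
def IsGeodesic (l : List V) : Prop :=
  ∀ l' : List V, wordProd L l' = wordProd L l → l.length ≤ l'.length

lemma exists_isGeodesic (g : W) : ∃ l, IsGeodesic L l ∧ wordProd L l = g := by
  classical
  have hex : ∃ n, ∃ l : List V, l.length = n ∧ wordProd L l = g :=
    let ⟨l, hl⟩ := exists_wordProd_eq g
    ⟨_, l, rfl, hl⟩
  obtain ⟨l, hlen, hl⟩ := Nat.find_spec hex
  exact ⟨l, fun l' hl' => hlen ▸ Nat.find_min' hex ⟨l', rfl, hl'.trans hl⟩, hl⟩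

lemma exists_shorter_of_not_reduced {l : List V} (hl : ¬ Reduced (commGraph L) l) :
    ∃ l', wordProd L l' = wordProd L l ∧ l'.length < l.length := by
  induction l with
  | nil => exact absurd trivial hl
  | cons v l ih =>
    by_cases hv : CanStart (commGraph L) v l
    · refine ⟨l.erase v, (wordProd_cons_of_canStart hv).symm, ?_⟩
      simp [List.length_erase_of_mem hv.mem]
    · obtain ⟨l', hl', hlen⟩ := ih fun h => hl ⟨hv, h⟩
      exact ⟨v :: l', by rw [wordProd_cons, wordProd_cons, hl'], by simpa using hlen⟩

lemma IsGeodesic.reduced {l : List V} (hl : IsGeodesic L l) : Reduced (commGraph L) l := by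
  by_contra h
  obtain ⟨l', hl', hlen⟩ := exists_shorter_of_not_reduced h
  exact (hl l' hl').not_gt hlen

theorem Reduced.isGeodesic {l : List V} (hl : Reduced (commGraph L) l) : IsGeodesic L l := by
  intro l' hl'
  obtain ⟨l'', hgeo, hl''⟩ := exists_isGeodesic (wordProd L l')
  have hperm := (hl.commEquiv_of_wordProd_eq hgeo.reduced (hl'.symm.trans hl''.symm)).perm
  exact hperm.length_eq ▸ hgeo l' hl''.symm

lemma IsGeodesic.of_commEquiv {l l' : List V} (hl : IsGeodesic L l)
    (h : CommEquiv (commGraph L) l l') : IsGeodesic L l' := by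
  intro m hm
  rw [← h.perm.length_eq]
  exact hl m (hm.trans h.wordProd_eq.symm)

lemma IsGeodesic.infix {l m : List V} (hl : IsGeodesic L l) (hm : m <:+: l) : IsGeodesic L m := by
  obtain ⟨p, q, rfl⟩ := hm
  intro m' hm'
  have := hl (p ++ m' ++ q) (by simp [hm'])
  simp only [List.length_append] at this
  omega

lemma not_isOfFinOrder_wordProd {l : List V} (hl : Reduced (commGraph L) l) (hne : l ≠ [])
    (hcyc : ∀ v, CanEnd (commGraph L) v l → ¬ CanStart (commGraph L) v l) :
    ¬ IsOfFinOrder (wordProd L l) := by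
  rw [isOfFinOrder_iff_pow_eq_one]
  rintro ⟨n, hn, hpow⟩
  have hprod : wordProd L [] = wordProd L (List.replicate n l).flatten := by
    simpa [wordProd, List.prod_flatten] using hpow.symm
  have := (hl.flatten_replicate hcyc n).isGeodesic [] hprod
  simp [List.length_flatten, List.sum_replicate] at this
  exact this.elim hn.ne' hne

lemma isOfFinOrder_of (v : V) : IsOfFinOrder (PresentedGroup.of v : W) :=
  isOfFinOrder_iff_pow_eq_one.2 ⟨2, two_pos, by rw [pow_two, of_mul_self]⟩

variable (L) in
/-- The letters are confined to `s` so that a generator commuting with all of `s` can be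
absorbed into the clique (`ConjIntoClique.of_mul`). -/
def ConjIntoClique (s : List V) (g : W) : Prop :=
  ∃ x c : List V, x ⊆ s ∧ c ⊆ s ∧ c.Pairwise (commGraph L).Adj ∧
    g = wordProd L x * wordProd L c * (wordProd L x)⁻¹

lemma ConjIntoClique.mono {s s' : List V} {g : W} (h : ConjIntoClique L s g) (hs : s ⊆ s') :
    ConjIntoClique L s' g :=
  let ⟨x, c, hx, hc, hpw, hg⟩ := h
  ⟨x, c, List.Subset.trans hx hs, List.Subset.trans hc hs, hpw, hg⟩

lemma ConjIntoClique.of_mul {v : V} {s : List V} {g : W} (h : ConjIntoClique L s g)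
    (hs : ∀ x ∈ s, (commGraph L).Adj x v) :
    ConjIntoClique L (v :: s) (PresentedGroup.of v * g) := by
  obtain ⟨x, c, hx, hc, hpw, rfl⟩ := h
  refine ⟨x, v :: c, List.subset_cons_of_subset v hx, List.cons_subset_cons v hc,
    List.pairwise_cons.2 ⟨fun y hy => (hs y (hc hy)).symm, hpw⟩, ?_⟩
  have hvx := commute_wordProd_of_forall_adj fun y hy => hs y (hx hy)
  rw [wordProd_cons, ← mul_assoc, ← mul_assoc, hvx.eq, mul_assoc (wordProd L x)]

lemma ConjIntoClique.conj {v : V} {s : List V} {g : W} (h : ConjIntoClique L s g) :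
    ConjIntoClique L (v :: s) (PresentedGroup.of v * g * PresentedGroup.of v) := by
  obtain ⟨x, c, hx, hc, hpw, rfl⟩ := h
  refine ⟨v :: x, c, List.cons_subset_cons v hx, List.subset_cons_of_subset v hc, hpw, ?_⟩
  rw [wordProd_cons, mul_inv_rev, of_inv]
  simp only [mul_assoc]

lemma isOfFinOrder_of_gen_mul {v : V} {g : W} (hg : Commute (PresentedGroup.of v) g)
    (h : IsOfFinOrder (PresentedGroup.of v * g)) : IsOfFinOrder g := by
  rw [← one_mul g, ← of_mul_self v, mul_assoc]
  exact ((Commute.refl _).mul_right hg).isOfFinOrder_mul (isOfFinOrder_of v) h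

lemma isOfFinOrder_of_gen_conj {v : V} {g : W}
    (h : IsOfFinOrder (PresentedGroup.of v * g * PresentedGroup.of v)) : IsOfFinOrder g := by
  refine IsConj.isOfFinOrder (isConj_iff.2 ⟨PresentedGroup.of v, ?_⟩) h
  rw [of_inv, ← mul_assoc, ← mul_assoc, of_mul_self, one_mul, mul_assoc, of_mul_self, mul_one]

theorem IsGeodesic.conjIntoClique {l : List V} (hl : IsGeodesic L l)
    (hfin : IsOfFinOrder (wordProd L l)) : ConjIntoClique L l (wordProd L l) := by
  induction hn : l.length using Nat.strong_induction_on generalizing l with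
  | _ n ih =>
  by_cases hcyc : ∃ v, CanStart (commGraph L) v l ∧ CanEnd (commGraph L) v l
  swap
  · push Not at hcyc
    by_cases hnil : l = []
    · exact ⟨[], [], by simp, by simp, .nil, by simp [hnil]⟩
    · exact absurd hfin (not_isOfFinOrder_wordProd hl.reduced hnil fun v he hs => hcyc v hs he)
  obtain ⟨v, hs, he⟩ := hcyc
  rcases exists_commEquiv_of_canStart_of_canEnd hs he with ⟨m, hm, hlm⟩ | ⟨m, hlm⟩
  · rw [hlm.wordProd_eq, wordProd_cons] at hfin ⊢
    have hlen : m.length < n := by simp [← hn, hlm.perm.length_eq]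
    have hgeo := (hl.of_commEquiv hlm).infix (List.suffix_cons v m).isInfix
    have hfin' := isOfFinOrder_of_gen_mul (commute_wordProd_of_forall_adj hm) hfin
    exact ((ih _ hlen hgeo hfin' rfl).of_mul hm).mono hlm.perm.symm.subset
  · rw [hlm.wordProd_eq, List.cons_append, wordProd_cons, wordProd_append, wordProd_cons,
      wordProd_nil, mul_one, ← mul_assoc] at hfin ⊢
    have hlen : m.length < n := by simp [← hn, hlm.perm.length_eq]
    have hgeo := (hl.of_commEquiv hlm).infix ⟨[v], [v], rfl⟩
    have hfin' := isOfFinOrder_of_gen_conj hfin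
    exact (ih _ hlen hgeo hfin' rfl).conj.mono fun x hx =>
      hlm.perm.symm.subset (List.subset_append_left _ _ hx)

lemma map_wordProd {M : Type*} [Monoid M] (f : W →* M) (l : List V) :
    f (wordProd L l) = (l.map fun v => f (PresentedGroup.of v)).prod := by
  simp [wordProd, map_list_prod, Function.comp_def]

lemma toFinset_mem_of_pairwise_adj (hflag : ∀ σ : Finset V, σ.Nonempty →
      (∀ v ∈ σ, ∀ w ∈ σ, v ≠ w → ({v, w} : Finset V) ∈ L) → σ ∈ L)
    {c : List V} (hc : c.Pairwise (commGraph L).Adj) (hne : c ≠ []) : c.toFinset ∈ L := by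
  have : Std.Symm (commGraph L).Adj := (commGraph L).symm
  refine hflag _ ((List.toFinset_nonempty_iff c).2 hne) fun v hv w hw hvw => ?_
  exact (hc.forall (List.mem_toFinset.1 hv) (List.mem_toFinset.1 hw) hvw).2

end Group

end RightAngledCoxeter

lemma LinearIndependent.eq_empty_of_sum_eq_zero {ι R M : Type*} [Ring R] [Nontrivial R]
    [AddCommGroup M] [Module R M] {s : Finset ι} {f : ι → M}
    (hli : LinearIndependent R (fun i : s => f i)) (hsum : ∑ i ∈ s, f i = 0) : s = ∅ := by
  by_contra hne
  obtain ⟨i, hi⟩ := Finset.nonempty_iff_ne_empty.2 hne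
  refine one_ne_zero (Fintype.linearIndependent_iff.1 hli (fun _ => (1 : R)) ?_ ⟨i, hi⟩)
  simpa [Finset.sum_attach] using hsum

theorem stmt_1_general {V : Type*} [DecidableEq V] (L : Set (Finset V))
    -- `L` is a flag complex:
    (hflag : ∀ σ : Finset V, σ.Nonempty →
      (∀ v ∈ σ, ∀ w ∈ σ, v ≠ w → ({v, w} : Finset V) ∈ L) → σ ∈ L)
    -- the characteristic function `λ` into the `ℤ/2`-vector space `G`:
    {G : Type*} [AddCommGroup G] [Module (ZMod 2) G] (lam : V → G)
    (hchar : ∀ σ ∈ L, LinearIndependent (ZMod 2) (fun v : σ => lam v))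
    -- `Λ : W_L → G`, the homomorphism extending `λ`:
    (Λ : PresentedGroup (racgRels V L) →* Multiplicative G)
    (hΛ : ∀ v : V, Λ (PresentedGroup.of v) = Multiplicative.ofAdd (lam v)) :
    -- `ker Λ` is torsion-free:
    ∀ g ∈ Λ.ker, IsOfFinOrder g → g = 1 := by
  open RightAngledCoxeter in
  intro g hker hfin
  obtain ⟨l, hl, rfl⟩ := exists_isGeodesic g
  obtain ⟨x, c, -, -, hc, hconj⟩ := hl.conjIntoClique hfin
  suffices c = [] by rw [hconj, this, wordProd_nil, mul_one, mul_inv_cancel]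
  have hsum : ∑ v ∈ c.toFinset, lam v = 0 := by
    rw [MonoidHom.mem_ker, hconj, map_mul, map_mul, map_inv, mul_inv_cancel_comm, map_wordProd]
      at hker
    rw [List.sum_toFinset _ (hc.imp (commGraph L).ne_of_adj), ← ofAdd_eq_one, ofAdd_list_prod,
      ← hker, List.map_map]
    simp [Function.comp_def, hΛ]
  by_contra hne
  have hsimplex := toFinset_mem_of_pairwise_adj hflag hc hne
  exact hne ((List.toFinset_eq_empty_iff c).1 ((hchar _ hsimplex).eq_empty_of_sum_eq_zero hsum))

theorem stmt_1 {V : Type*} [DecidableEq V] (L : Set (Finset V))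
    -- `L` is a simplicial complex with vertex set `V`:
    (hne : ∀ σ ∈ L, σ.Nonempty)
    (hdown : ∀ σ ∈ L, ∀ τ ⊆ σ, τ.Nonempty → τ ∈ L)
    (hvert : ∀ v : V, ({v} : Finset V) ∈ L)
    -- `L` is a flag complex:
    (hflag : ∀ σ : Finset V, σ.Nonempty →
      (∀ v ∈ σ, ∀ w ∈ σ, v ≠ w → ({v, w} : Finset V) ∈ L) → σ ∈ L)
    -- the characteristic function `λ` into the `ℤ/2`-vector space `G`:
    {G : Type*} [AddCommGroup G] [Module (ZMod 2) G] (lam : V → G)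
    (hchar : ∀ σ ∈ L, LinearIndependent (ZMod 2) (fun v : σ => lam v))
    -- `Λ : W_L → G`, the homomorphism extending `λ`:
    (Λ : PresentedGroup (racgRels V L) →* Multiplicative G)
    (hΛ : ∀ v : V, Λ (PresentedGroup.of v) = Multiplicative.ofAdd (lam v)) :
    -- `ker Λ` is torsion-free:
    ∀ g ∈ Λ.ker, IsOfFinOrder g → g = 1 :=
  stmt_1_general L hflag lam hchar Λ hΛ
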